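/- Let X be a nonnegative real-valued random variable on a probability space with E[X²] < ∞, and let b₀ ≥ 0 be a point with P(X = b₀) = 0. Then the function b ↦ E[min{X, b}²] is differentiable at b₀ with derivative equal to 2·b₀·P(X ≥ b₀). -/

import Mathlib

open MeasureTheory Filter Metric

private theorem capMin_aux
    {Ω : Type*} [MeasurableSpace Ω] (μ : Measure Ω) [IsProbabilityMeasure μ]
    (X : Ω → ℝ) (hX : Integrable (fun ω => (X ω) ^ 2) μ)
    (hXmeas : Measurable X) (hXnn : ∀ ω, 0 ≤ X ω)
    (b₀ : ℝ) (hb₀ : 0 ≤ b₀) (hatom : μ {ω | X ω = b₀} = 0) :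
    HasDerivAt (fun b : ℝ => ∫ ω, (min (X ω) b) ^ 2 ∂μ)
      (2 * b₀ * (μ {ω | b₀ ≤ X ω}).toReal) b₀ := by
  classical
  have hXint : Integrable X μ := by
    refine (hX.add (integrable_const 1)).mono hXmeas.aestronglyMeasurable ?_
    filter_upwards with ω
    have h := hXnn ω
    simp only [Pi.add_apply, Real.norm_eq_abs]
    rw [abs_of_nonneg h, abs_of_nonneg (by positivity)]
    nlinarith [sq_nonneg (X ω - 1)]
  set F' : Ω → ℝ := fun ω => if b₀ < X ω then 2 * b₀ else 0 with hF'def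
  have hset : MeasurableSet {ω | b₀ < X ω} := measurableSet_lt measurable_const hXmeas
  have key := hasDerivAt_integral_of_dominated_loc_of_lip
    (F := fun b ω => (min (X ω) b) ^ 2) (F' := F')
    (bound := fun ω => 2 * (X ω + b₀ + 1)) (μ := μ) (x₀ := b₀) (ball_mem_nhds b₀ one_pos)
    ?_ ?_ ?_ ?_ ?_ ?_
  · have hint : ∫ ω, F' ω ∂μ = 2 * b₀ * (μ {ω | b₀ < X ω}).toReal := by
      have : F' = Set.indicator {ω | b₀ < X ω} (fun _ => 2 * b₀) := by
        ext ω
        by_cases h : b₀ < X ω <;> simp [F', Set.indicator, h]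
      rw [this, integral_indicator_const _ hset, smul_eq_mul, mul_comm, measureReal_def]
    have hmeq : μ {ω | b₀ < X ω} = μ {ω | b₀ ≤ X ω} := by
      refine measure_congr ?_
      rw [Filter.eventuallyEq_set]
      have : ∀ᵐ ω ∂μ, X ω ≠ b₀ := by
        rw [ae_iff]; simpa using hatom
      filter_upwards [this] with ω hω
      constructor
      · exact le_of_lt
      · intro h; exact lt_of_le_of_ne h (Ne.symm hω)
    rw [hint, hmeq] at key
    exact key.2
  · -- measurability of F b
    filter_upwards with b
    exact ((hXmeas.min measurable_const).pow_const 2).aestronglyMeasurable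
  · -- integrability at b₀
    refine hX.mono ((hXmeas.min measurable_const).pow_const 2).aestronglyMeasurable ?_
    filter_upwards with ω
    rw [Real.norm_eq_abs, Real.norm_eq_abs, abs_of_nonneg (by positivity),
      abs_of_nonneg (sq_nonneg _)]
    have h1 : 0 ≤ min (X ω) b₀ := le_min (hXnn ω) hb₀
    have h2 : min (X ω) b₀ ≤ X ω := min_le_left _ _
    nlinarith
  · -- measurability of F'
    refine Measurable.aestronglyMeasurable ?_
    exact Measurable.ite hset measurable_const measurable_const
  · -- Lipschitz
    filter_upwards with ω
    refine LipschitzOnWith.of_dist_le_mul fun b hb b' hb' => ?_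
    have hbd : ∀ c : ℝ, c ∈ ball b₀ 1 → |min (X ω) c| ≤ X ω + b₀ + 1 := by
      intro c hc
      rw [mem_ball, Real.dist_eq] at hc
      have hx := hXnn ω
      rcases le_total (X ω) c with h | h
      · rw [min_eq_left h, abs_of_nonneg hx]; cases abs_lt.1 hc; linarith
      · rw [min_eq_right h]
        rcases abs_lt.1 hc with ⟨h1, h2⟩
        rw [abs_le]; constructor <;> linarith
    have hb1 := hbd b hb
    have hb2 := hbd b' hb'
    have key2 : ∀ c c' : ℝ, c ≤ c' → min (X ω) c' - min (X ω) c ≤ c' - c := by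
      intro c c' hcc
      rcases le_total (X ω) c with hx | hx
      · rw [min_eq_left hx, min_eq_left (hx.trans hcc)]; linarith
      · rw [min_eq_right hx]
        have := min_le_right (X ω) c'; linarith
    have hmin : |min (X ω) b - min (X ω) b'| ≤ |b - b'| := by
      rcases le_total b b' with h | h
      · have h0 : min (X ω) b ≤ min (X ω) b' := min_le_min le_rfl h
        rw [abs_sub_comm, abs_of_nonneg (by linarith), abs_sub_comm, abs_of_nonneg (by linarith)]
        exact key2 b b' h
      · have h0 : min (X ω) b' ≤ min (X ω) b := min_le_min le_rfl h
        rw [abs_of_nonneg (by linarith), abs_of_nonneg (by linarith)]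
        exact key2 b' b h
    rw [Real.dist_eq, Real.dist_eq, Real.coe_nnabs]
    have hval : |2 * (X ω + b₀ + 1)| = 2 * (X ω + b₀ + 1) := by
      rw [abs_of_nonneg]; have := hXnn ω; linarith
    rw [hval]
    set u := min (X ω) b
    set v := min (X ω) b'
    have : u ^ 2 - v ^ 2 = (u + v) * (u - v) := by ring
    rw [this, abs_mul]
    have habs : |u + v| ≤ 2 * (X ω + b₀ + 1) := by
      calc |u + v| ≤ |u| + |v| := abs_add_le _ _
        _ ≤ 2 * (X ω + b₀ + 1) := by linarith
    calc |u + v| * |u - v| ≤ (2 * (X ω + b₀ + 1)) * |b - b'| :=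
          mul_le_mul habs hmin (abs_nonneg _) (by have := hXnn ω; linarith)
      _ = 2 * (X ω + b₀ + 1) * |b - b'| := by ring
  · -- bound integrable
    exact (hXint.add (integrable_const b₀)).add (integrable_const 1) |>.const_mul 2 |>.congr
      (by filter_upwards with ω; simp only [Pi.add_apply]; try ring)
  · -- pointwise derivative a.e.
    have : ∀ᵐ ω ∂μ, X ω ≠ b₀ := by rw [ae_iff]; simpa using hatom
    filter_upwards [this] with ω hω
    rcases lt_or_gt_of_ne hω with h | h
    · -- X ω < b₀, derivative 0
      have hF'0 : F' ω = 0 := by simp [F', not_lt.2 h.le]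
      rw [hF'0]
      have : (fun b => (min (X ω) b) ^ 2) =ᶠ[nhds b₀] fun _ => (X ω) ^ 2 := by
        filter_upwards [eventually_gt_nhds h] with b hb
        rw [min_eq_left hb.le]
      exact (hasDerivAt_const b₀ ((X ω) ^ 2)).congr_of_eventuallyEq this
    · -- b₀ < X ω, derivative 2 b₀
      have hF'2 : F' ω = 2 * b₀ := by simp [F', h]
      rw [hF'2]
      have : (fun b => (min (X ω) b) ^ 2) =ᶠ[nhds b₀] fun b => b ^ 2 := by
        filter_upwards [eventually_lt_nhds h] with b hb
        rw [min_eq_right hb.le]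
      have hd : HasDerivAt (fun b : ℝ => b ^ 2) (2 * b₀) b₀ := by
        simpa using hasDerivAt_pow 2 b₀
      exact hd.congr_of_eventuallyEq this

/-- Conditional cap–min calculus, second part: for a nonnegative
random variable `X` on a probability space with `E[X²] < ∞` and a cap
`b₀ ≥ 0` with `P(X = b₀) = 0`, the map `b ↦ E[(min {X, b})²]` is
differentiable at `b₀` with derivative `2·b₀·P(X ≥ b₀)`. -/
theorem capMin_sq_expectation_hasDerivAt
    {Ω : Type*} [MeasurableSpace Ω] (μ : Measure Ω) [IsProbabilityMeasure μ]
    (X : Ω → ℝ) (hX : Integrable (fun ω => (X ω) ^ 2) μ)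
    (hXmeas : AEStronglyMeasurable X μ) (hXnn : ∀ ω, 0 ≤ X ω)
    (b₀ : ℝ) (hb₀ : 0 ≤ b₀) (hatom : μ {ω | X ω = b₀} = 0) :
    HasDerivAt (fun b : ℝ => ∫ ω, (min (X ω) b) ^ 2 ∂μ)
      (2 * b₀ * (μ {ω | b₀ ≤ X ω}).toReal) b₀ := by
  obtain ⟨Y₀, hY₀meas, hXY₀⟩ := hXmeas
  set Y : Ω → ℝ := fun ω => max (Y₀ ω) 0 with hYdef
  have hYmeas : Measurable Y := hY₀meas.measurable.max measurable_const
  have hXY : X =ᵐ[μ] Y := by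
    filter_upwards [hXY₀] with ω hω
    rw [hYdef]; simp only; rw [← hω, max_eq_left (hXnn ω)]
  have hYnn : ∀ ω, 0 ≤ Y ω := fun ω => le_max_right _ _
  have hYX : Integrable (fun ω => (Y ω) ^ 2) μ := by
    refine hX.congr ?_
    filter_upwards [hXY] with ω hω; rw [hω]
  have hYatom : μ {ω | Y ω = b₀} = 0 := by
    rw [← hatom]
    refine measure_congr ?_
    rw [Filter.eventuallyEq_set]
    filter_upwards [hXY] with ω hω
    simp [Set.mem_setOf_eq, hω]
  have hmeq : μ {ω | b₀ ≤ X ω} = μ {ω | b₀ ≤ Y ω} := by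
    refine measure_congr ?_
    rw [Filter.eventuallyEq_set]
    filter_upwards [hXY] with ω hω
    simp [Set.mem_setOf_eq, hω]
  have hfeq : (fun b : ℝ => ∫ ω, (min (X ω) b) ^ 2 ∂μ)
      = fun b : ℝ => ∫ ω, (min (Y ω) b) ^ 2 ∂μ := by
    funext b
    refine integral_congr_ae ?_
    filter_upwards [hXY] with ω hω; rw [hω]
  rw [hfeq, hmeq]
  exact capMin_aux μ Y hYX hYmeas hYnn b₀ hb₀ hYatom
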